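/- arXiv:2007.12434 — 7 statements merged into one kernel-verified Lean document; each statement's English description precedes it below -/
import Mathlib

section
/- Let G be a connected graph. Then for every nontrivial partition (V1, V2) of V(G), the minimum over all vertices v of the degree ratio q^i(v) is at most max over edges uv of min{d(u)/(d(u)+1), d(v)/(d(v)+1)}. In particular q(G) ≤ max_{uv ∈ E(G)} min{d(u)/(d(u)+1), d(v)/(d(v)+1)}. -/
open SimpleGraph Set
open scoped Classical

/-- The degree ratio of a vertex `v` with respect to the partition `(s, sᶜ)`:
the size of its closed neighborhood inside its own side divided by the size of
its closed neighborhood in `G`. -/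
noncomputable def vertexRatio {V : Type*} (G : SimpleGraph V) (s : Set V) (v : V) : ℝ :=
  (((G.neighborSet v ∩ (if v ∈ s then s else sᶜ)).ncard : ℝ) + 1) /
    (((G.neighborSet v).ncard : ℝ) + 1)

/-- The worst (minimum) degree ratio over all vertices, for the partition `(s, sᶜ)`. -/
noncomputable def minRatio {V : Type*} (G : SimpleGraph V) (s : Set V) : ℝ :=
  sInf (Set.range (vertexRatio G s))

/-- The optimal degree ratio `q(G)`: the maximum over all nontrivial partitions
of the worst degree ratio. -/
noncomputable def degreeRatio {V : Type*} (G : SimpleGraph V) : ℝ :=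
  sSup { r : ℝ | ∃ s : Set V, s.Nonempty ∧ sᶜ.Nonempty ∧ r = minRatio G s }

lemma card_bound {V : Type*} [Fintype V] (G : SimpleGraph V) {a b : V}
    (hab : G.Adj a b) (t : Set V) (hb : b ∉ t) :
    ((G.neighborSet a ∩ t).ncard : ℝ) + 1 ≤ (G.neighborSet a).ncard := by
  have hss : G.neighborSet a ∩ t ⊂ G.neighborSet a := by
    constructor
    · exact Set.inter_subset_left
    · intro h
      exact hb (h hab).2
  have := Set.ncard_lt_ncard hss (Set.toFinite _)
  exact_mod_cast this

lemma ratio_nonneg {V : Type*} (G : SimpleGraph V) (s : Set V) (v : V) :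
    0 ≤ vertexRatio G s v := by
  unfold vertexRatio; positivity

lemma minRatio_le {V : Type*} (G : SimpleGraph V) (s : Set V) (v : V) :
    minRatio G s ≤ vertexRatio G s v :=
  csInf_le ⟨0, by rintro _ ⟨w, rfl⟩; exact ratio_nonneg G s w⟩ ⟨v, rfl⟩

lemma vertexRatio_le {V : Type*} [Fintype V] (G : SimpleGraph V) {s : Set V} {a b : V}
    (hab : G.Adj a b) (hcross : (a ∈ s ∧ b ∉ s) ∨ (a ∉ s ∧ b ∈ s)) :
    vertexRatio G s a ≤
      ((G.neighborSet a).ncard : ℝ) / (((G.neighborSet a).ncard : ℝ) + 1) := by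
  unfold vertexRatio
  rcases hcross with ⟨ha, hb⟩ | ⟨ha, hb⟩
  · rw [if_pos ha]
    gcongr
    exact card_bound G hab s hb
  · rw [if_neg ha]
    gcongr
    exact card_bound G hab sᶜ (by simpa using hb)

lemma minRatio_le_min {V : Type*} [Fintype V] (G : SimpleGraph V) {s : Set V} {a b : V}
    (hab : G.Adj a b) (ha : a ∈ s) (hb : b ∉ s) :
    minRatio G s ≤
      min (((G.neighborSet a).ncard : ℝ) / (((G.neighborSet a).ncard : ℝ) + 1))
          (((G.neighborSet b).ncard : ℝ) / (((G.neighborSet b).ncard : ℝ) + 1)) := by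
  apply le_min
  · exact (minRatio_le G s a).trans (vertexRatio_le G hab (Or.inl ⟨ha, hb⟩))
  · exact (minRatio_le G s b).trans (vertexRatio_le G hab.symm (Or.inr ⟨hb, ha⟩))

lemma cross_edge {V : Type*} (G : SimpleGraph V) (hG : G.Connected) {s : Set V}
    (hs : s.Nonempty) (hsc : sᶜ.Nonempty) :
    ∃ a b, G.Adj a b ∧ a ∈ s ∧ b ∉ s := by
  obtain ⟨x, hx⟩ := hs
  obtain ⟨y, hy⟩ := hsc
  obtain ⟨p⟩ := hG.preconnected x y
  obtain ⟨d, _, hd1, hd2⟩ := p.exists_boundary_dart s hx hy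
  exact ⟨d.fst, d.snd, d.adj, hd1, hd2⟩

theorem stmt_0 {V : Type*} [Fintype V] (G : SimpleGraph V) (hG : G.Connected)
    (hV : Nontrivial V) :
    (∀ s : Set V, s.Nonempty → sᶜ.Nonempty →
      ∃ u v, G.Adj u v ∧ minRatio G s ≤
        min (((G.neighborSet u).ncard : ℝ) / (((G.neighborSet u).ncard : ℝ) + 1))
            (((G.neighborSet v).ncard : ℝ) / (((G.neighborSet v).ncard : ℝ) + 1))) ∧
    (∃ u v, G.Adj u v ∧ degreeRatio G ≤
        min (((G.neighborSet u).ncard : ℝ) / (((G.neighborSet u).ncard : ℝ) + 1))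
            (((G.neighborSet v).ncard : ℝ) / (((G.neighborSet v).ncard : ℝ) + 1))) := by
  set f : V × V → ℝ := fun p =>
    min (((G.neighborSet p.1).ncard : ℝ) / (((G.neighborSet p.1).ncard : ℝ) + 1))
        (((G.neighborSet p.2).ncard : ℝ) / (((G.neighborSet p.2).ncard : ℝ) + 1)) with hf
  constructor
  · intro s hs hsc
    obtain ⟨a, b, hab, ha, hb⟩ := cross_edge G hG hs hsc
    exact ⟨a, b, hab, minRatio_le_min G hab ha hb⟩
  · -- there exists at least one edge
    obtain ⟨x, y, hxy⟩ := hV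
    obtain ⟨a0, b0, hab0, _, _⟩ := cross_edge G hG (s := {x}) ⟨x, rfl⟩
      ⟨y, by simpa using hxy.symm⟩
    have hne : (Finset.univ.filter (fun p : V × V => G.Adj p.1 p.2)).Nonempty :=
      ⟨(a0, b0), by simp [hab0]⟩
    obtain ⟨p, hp, hmax⟩ := Finset.exists_max_image _ f hne
    have hpadj : G.Adj p.1 p.2 := by simpa using (Finset.mem_filter.mp hp).2
    refine ⟨p.1, p.2, hpadj, ?_⟩
    apply Real.sSup_le
    · rintro r ⟨s, hs, hsc, rfl⟩
      obtain ⟨a, b, hab, ha, hb⟩ := cross_edge G hG hs hsc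
      refine (minRatio_le_min G hab ha hb).trans ?_
      exact hmax (a, b) (by simp [hab])
    · refine le_min (by positivity) (by positivity)
end

section
/- If G is a tree with at least two vertices, then q(G) = max_{uv ∈ E(G)} min{d(u)/(d(u)+1), d(v)/(d(v)+1)}. -/
/-!
A vertex with `c` neighbours on the other side of a partition has degree ratio
`1 - c / (d + 1)`. Across any nontrivial partition of a connected graph there is an edge `uv`, and
each of its endpoints has `c ≥ 1`, so the partition is worth at most
`min {d(u)/(d(u)+1), d(v)/(d(v)+1)}`. Conversely, in a tree every edge `uv` is a bridge;
splitting the tree at `uv` gives a partition whose only crossing edge is `uv`, so every vertex has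
`c ≤ 1`, with `c = 0` away from `u` and `v`, and the partition is worth exactly that minimum.
-/

open SimpleGraph Set
open scoped Classical

section DegreeRatio

variable {V : Type*} {G : SimpleGraph V} {s : Set V} {u v w : V}

def crossNeighborSet (G : SimpleGraph V) (s : Set V) (v : V) : Set V :=
  G.neighborSet v \ if v ∈ s then s else sᶜ

/-- The degree ratio of a vertex with exactly one neighbour across the partition. -/
noncomputable def degreeFraction (G : SimpleGraph V) (v : V) : ℝ :=
  ((G.neighborSet v).ncard : ℝ) / (((G.neighborSet v).ncard : ℝ) + 1)

lemma mem_crossNeighborSet : w ∈ crossNeighborSet G s v ↔ G.Adj v w ∧ (v ∈ s ↔ w ∉ s) := by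
  unfold crossNeighborSet
  split_ifs with hv <;> simp [hv]

lemma degreeFraction_le_one (G : SimpleGraph V) (v : V) : degreeFraction G v ≤ 1 := by
  unfold degreeFraction
  rw [div_le_one (by positivity)]
  linarith

lemma vertexRatio_nonneg (G : SimpleGraph V) (s : Set V) (v : V) : 0 ≤ vertexRatio G s v := by
  unfold vertexRatio
  positivity

lemma vertexRatio_eq_one_sub [Finite V] (G : SimpleGraph V) (s : Set V) (v : V) :
    vertexRatio G s v =
      1 - ((crossNeighborSet G s v).ncard : ℝ) / (((G.neighborSet v).ncard : ℝ) + 1) := by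
  have hsplit := ncard_inter_add_ncard_sdiff_eq_ncard (G.neighborSet v)
    (if v ∈ s then s else sᶜ) (toFinite _)
  unfold vertexRatio crossNeighborSet
  field_simp
  rw [← hsplit]
  push_cast
  ring

lemma vertexRatio_le_degreeFraction [Finite V] (hw : w ∈ crossNeighborSet G s v) :
    vertexRatio G s v ≤ degreeFraction G v := by
  have hc : (1 : ℝ) ≤ (crossNeighborSet G s v).ncard := by
    exact_mod_cast (ncard_pos (toFinite _)).mpr ⟨w, hw⟩
  rw [vertexRatio_eq_one_sub, degreeFraction, le_div_iff₀ (by positivity), sub_mul,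
    div_mul_cancel₀ _ (by positivity)]
  linarith

lemma degreeFraction_le_vertexRatio [Finite V] (h : crossNeighborSet G s v ⊆ {w}) :
    degreeFraction G v ≤ vertexRatio G s v := by
  have hc : ((crossNeighborSet G s v).ncard : ℝ) ≤ 1 := by
    exact_mod_cast (ncard_le_ncard h).trans (ncard_singleton w).le
  rw [vertexRatio_eq_one_sub, degreeFraction, div_le_iff₀ (by positivity), sub_mul,
    div_mul_cancel₀ _ (by positivity)]
  linarith

lemma vertexRatio_eq_one [Finite V] (h : crossNeighborSet G s v = ∅) : vertexRatio G s v = 1 := by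
  simp [vertexRatio_eq_one_sub, h]

lemma minRatio_le_vertexRatio (G : SimpleGraph V) (s : Set V) (v : V) :
    minRatio G s ≤ vertexRatio G s v :=
  csInf_le ⟨0, by rintro _ ⟨w, rfl⟩; exact vertexRatio_nonneg G s w⟩ ⟨v, rfl⟩

lemma minRatio_le_of_adj [Finite V] (huv : G.Adj u v) (hu : u ∈ s) (hv : v ∉ s) :
    minRatio G s ≤ min (degreeFraction G u) (degreeFraction G v) := by
  refine le_min ((minRatio_le_vertexRatio G s u).trans (vertexRatio_le_degreeFraction (w := v) ?_))
    ((minRatio_le_vertexRatio G s v).trans (vertexRatio_le_degreeFraction (w := u) ?_))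
  · exact mem_crossNeighborSet.mpr ⟨huv, by simp [hu, hv]⟩
  · exact mem_crossNeighborSet.mpr ⟨huv.symm, by simp [hu, hv]⟩

lemma le_minRatio_of_forall_crossing [Finite V]
    (hcross : ∀ x y, G.Adj x y → x ∈ s → y ∉ s → x = u ∧ y = v) :
    min (degreeFraction G u) (degreeFraction G v) ≤ minRatio G s := by
  have hcases : ∀ w y, y ∈ crossNeighborSet G s w → w = u ∧ y = v ∨ w = v ∧ y = u := by
    intro w y hy
    obtain ⟨hwy, hside⟩ := mem_crossNeighborSet.mp hy
    by_cases hw : w ∈ s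
    · exact .inl (hcross w y hwy hw (hside.mp hw))
    · exact .inr (hcross y w hwy.symm (not_not.mp (mt hside.mpr hw)) hw).symm
  refine le_csInf ⟨_, u, rfl⟩ ?_
  rintro _ ⟨w, rfl⟩
  by_cases hwu : w = u
  · subst hwu
    refine (min_le_left _ _).trans (degreeFraction_le_vertexRatio (w := v) fun y hy => ?_)
    rcases hcases w y hy with ⟨-, rfl⟩ | ⟨rfl, rfl⟩ <;> rfl
  by_cases hwv : w = v
  · subst hwv
    refine (min_le_right _ _).trans (degreeFraction_le_vertexRatio (w := u) fun y hy => ?_)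
    rcases hcases w y hy with ⟨rfl, rfl⟩ | ⟨-, rfl⟩ <;> rfl
  rw [vertexRatio_eq_one (eq_empty_of_forall_notMem fun y hy => by
    rcases hcases w y hy with ⟨h, -⟩ | ⟨h, -⟩ <;> contradiction)]
  exact (min_le_left _ _).trans (degreeFraction_le_one G u)

lemma SimpleGraph.IsBridge.exists_forall_crossing (h : G.IsBridge s(u, v)) :
    ∃ s : Set V, u ∈ s ∧ v ∉ s ∧ ∀ x y, G.Adj x y → x ∈ s → y ∉ s → x = u ∧ y = v := by
  refine ⟨{w | (G.deleteEdges {s(u, v)}).Reachable u w}, Reachable.refl u, h, ?_⟩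
  intro x y hxy hx hy
  by_contra hne
  refine hy (hx.trans (Adj.reachable ((deleteEdges_adj ..).mpr ⟨hxy, ?_⟩)))
  rintro (heq : s(x, y) = s(u, v))
  rcases Sym2.eq_iff.mp heq with huv | ⟨rfl, -⟩
  · exact hne huv
  · exact h hx

lemma SimpleGraph.Connected.exists_adj_mem_notMem (hG : G.Connected) (hs : s.Nonempty) (hsc : sᶜ.Nonempty) :
    ∃ u v, G.Adj u v ∧ u ∈ s ∧ v ∉ s := by
  obtain ⟨a, ha⟩ := hs
  obtain ⟨b, hb⟩ := hsc
  obtain ⟨d, -, hd, hd'⟩ := (hG.preconnected a b).some.exists_boundary_dart s ha hb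
  exact ⟨_, _, d.adj, hd, hd'⟩

lemma finite_partitionRatios [Finite V] (G : SimpleGraph V) :
    { r : ℝ | ∃ s : Set V, s.Nonempty ∧ sᶜ.Nonempty ∧ r = minRatio G s }.Finite :=
  (finite_range (minRatio G)).subset fun _ ⟨s, _, _, hr⟩ => ⟨s, hr.symm⟩

lemma minRatio_le_degreeRatio [Finite V] (hs : s.Nonempty) (hsc : sᶜ.Nonempty) :
    minRatio G s ≤ degreeRatio G :=
  le_csSup (finite_partitionRatios G).bddAbove ⟨s, hs, hsc, rfl⟩

lemma exists_degreeRatio_eq_minRatio [Finite V] [Nontrivial V] (G : SimpleGraph V) :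
    ∃ s : Set V, s.Nonempty ∧ sᶜ.Nonempty ∧ degreeRatio G = minRatio G s := by
  obtain ⟨a, b, hab⟩ := exists_pair_ne V
  have hne : { r : ℝ | ∃ s : Set V, s.Nonempty ∧ sᶜ.Nonempty ∧ r = minRatio G s }.Nonempty :=
    ⟨_, {a}, singleton_nonempty a, ⟨b, hab.symm⟩, rfl⟩
  exact hne.csSup_mem (finite_partitionRatios G)

end DegreeRatio

theorem stmt_1 {V : Type*} [Fintype V] (G : SimpleGraph V) (hG : G.IsTree)
    (hV : Nontrivial V) :
    (∃ u v, G.Adj u v ∧ degreeRatio G =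
        min (((G.neighborSet u).ncard : ℝ) / (((G.neighborSet u).ncard : ℝ) + 1))
            (((G.neighborSet v).ncard : ℝ) / (((G.neighborSet v).ncard : ℝ) + 1))) ∧
    (∀ u v, G.Adj u v →
        min (((G.neighborSet u).ncard : ℝ) / (((G.neighborSet u).ncard : ℝ) + 1))
            (((G.neighborSet v).ncard : ℝ) / (((G.neighborSet v).ncard : ℝ) + 1))
          ≤ degreeRatio G) := by
  have edge_le : ∀ u v, G.Adj u v →
      min (degreeFraction G u) (degreeFraction G v) ≤ degreeRatio G := by
    intro u v huv
    obtain ⟨s, hu, hv, hcross⟩ :=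
      (isAcyclic_iff_forall_adj_isBridge.mp hG.isAcyclic huv).exists_forall_crossing
    exact (le_minRatio_of_forall_crossing hcross).trans (minRatio_le_degreeRatio ⟨u, hu⟩ ⟨v, hv⟩)
  refine ⟨?_, edge_le⟩
  obtain ⟨s, hs, hsc, hq⟩ := exists_degreeRatio_eq_minRatio G
  obtain ⟨u, v, huv, hu, hv⟩ := hG.connected.exists_adj_mem_notMem hs hsc
  exact ⟨u, v, huv, le_antisymm (hq ▸ minRatio_le_of_adj huv hu hv) (edge_le u v huv)⟩
end

section
/- If G is a connected graph with at least two vertices, then q(G) < 1. -/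
open SimpleGraph Set
open scoped Classical

/-!
The optimum is attained, since there are finitely many partitions. In any nontrivial
partition of a connected graph some edge `xy` crosses it, and then `x` loses the neighbour
`y` from its own side, so its degree ratio, and with it the minimum, is below `1`.
-/

namespace SimpleGraph

variable {V : Type*} {G : SimpleGraph V} {s : Set V}

theorem Connected.exists_adj_mem_notMem_s3 (hG : G.Connected) (hs : s.Nonempty)
    (hsc : sᶜ.Nonempty) : ∃ x y, x ∈ s ∧ y ∉ s ∧ G.Adj x y := by
  obtain ⟨u, hu⟩ := hs
  obtain ⟨w, hw⟩ := hsc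
  obtain ⟨p⟩ := hG.preconnected u w
  obtain ⟨d, -, hd, hd'⟩ := p.exists_boundary_dart s hu hw
  exact ⟨d.fst, d.snd, hd, hd', d.adj⟩

theorem vertexRatio_lt_one_of_adj [Finite V] {x y : V} (hx : x ∈ s) (hy : y ∉ s)
    (hxy : G.Adj x y) : vertexRatio G s x < 1 := by
  have hssub : G.neighborSet x ∩ s ⊂ G.neighborSet x :=
    ⟨inter_subset_left, fun hsub => hy (hsub hxy).2⟩
  rw [vertexRatio, if_pos hx, div_lt_one (by positivity)]
  exact add_lt_add_left (Nat.cast_lt.mpr (ncard_lt_ncard hssub)) 1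

theorem minRatio_le_vertexRatio [Finite V] (s : Set V) (v : V) :
    minRatio G s ≤ vertexRatio G s v :=
  csInf_le (finite_range _).bddBelow (mem_range_self v)

theorem Connected.minRatio_lt_one [Finite V] (hG : G.Connected) (hs : s.Nonempty)
    (hsc : sᶜ.Nonempty) : minRatio G s < 1 := by
  obtain ⟨x, y, hx, hy, hxy⟩ := hG.exists_adj_mem_notMem_s3 hs hsc
  exact (minRatio_le_vertexRatio s x).trans_lt (vertexRatio_lt_one_of_adj hx hy hxy)

variable (G) in
theorem exists_degreeRatio_eq_minRatio [Finite V] [Nontrivial V] :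
    ∃ s : Set V, s.Nonempty ∧ sᶜ.Nonempty ∧ degreeRatio G = minRatio G s := by
  set S := { r : ℝ | ∃ s : Set V, s.Nonempty ∧ sᶜ.Nonempty ∧ r = minRatio G s }
  have hfin : S.Finite := (finite_range (minRatio G)).subset <| by
    rintro r ⟨s, -, -, rfl⟩
    exact mem_range_self s
  obtain ⟨a, b, hab⟩ := exists_pair_ne V
  have hne : S.Nonempty :=
    ⟨minRatio G {a}, {a}, singleton_nonempty a, ⟨b, by simpa using hab.symm⟩, rfl⟩
  exact hne.csSup_mem hfin

end SimpleGraph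

theorem stmt_3 {V : Type*} [Fintype V] (G : SimpleGraph V) (hV : Nontrivial V)
    (hG : G.Connected) :
    degreeRatio G < 1 := by
  obtain ⟨s, hs, hsc, hq⟩ := G.exists_degreeRatio_eq_minRatio
  exact hq ▸ hG.minRatio_lt_one hs hsc
end

section
/- For the complete bipartite graph K_{2p+1,2p+1}, q(K_{2p+1,2p+1}) = 1/2. -/
open SimpleGraph Set
open scoped Classical

section Aux

private lemma nbhd_inl (n : ℕ) (i : Fin n) :
    (completeBipartiteGraph (Fin n) (Fin n)).neighborSet (Sum.inl i) = Set.range Sum.inr := by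
  ext x; cases x <;> simp [completeBipartiteGraph]

private lemma nbhd_inr (n : ℕ) (j : Fin n) :
    (completeBipartiteGraph (Fin n) (Fin n)).neighborSet (Sum.inr j) = Set.range Sum.inl := by
  ext x; cases x <;> simp [completeBipartiteGraph]

private lemma ncard_range_inr (n : ℕ) :
    (Set.range (Sum.inr : Fin n → Fin n ⊕ Fin n)).ncard = n := by
  rw [← Set.image_univ, Set.ncard_image_of_injective _ Sum.inr_injective, Set.ncard_univ]
  simp

private lemma ncard_range_inl (n : ℕ) :
    (Set.range (Sum.inl : Fin n → Fin n ⊕ Fin n)).ncard = n := by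
  rw [← Set.image_univ, Set.ncard_image_of_injective _ Sum.inl_injective, Set.ncard_univ]
  simp

private lemma ncard_inter_inr (n : ℕ) (t : Set (Fin n ⊕ Fin n)) :
    (Set.range (Sum.inr : Fin n → Fin n ⊕ Fin n) ∩ t).ncard = (Sum.inr ⁻¹' t).ncard := by
  rw [Set.inter_comm, ← Set.image_preimage_eq_inter_range,
    Set.ncard_image_of_injective _ Sum.inr_injective]

private lemma ncard_inter_inl (n : ℕ) (t : Set (Fin n ⊕ Fin n)) :
    (Set.range (Sum.inl : Fin n → Fin n ⊕ Fin n) ∩ t).ncard = (Sum.inl ⁻¹' t).ncard := by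
  rw [Set.inter_comm, ← Set.image_preimage_eq_inter_range,
    Set.ncard_image_of_injective _ Sum.inl_injective]

private lemma vr_inl (n : ℕ) (s : Set (Fin n ⊕ Fin n)) (i : Fin n) (h : Sum.inl i ∈ s) :
    vertexRatio (completeBipartiteGraph (Fin n) (Fin n)) s (Sum.inl i)
      = (((Sum.inr ⁻¹' s).ncard : ℝ) + 1) / ((n : ℝ) + 1) := by
  rw [vertexRatio, if_pos h, nbhd_inl, ncard_inter_inr, ncard_range_inr]

private lemma vr_inl' (n : ℕ) (s : Set (Fin n ⊕ Fin n)) (i : Fin n) (h : Sum.inl i ∉ s) :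
    vertexRatio (completeBipartiteGraph (Fin n) (Fin n)) s (Sum.inl i)
      = ((((Sum.inr ⁻¹' s)ᶜ).ncard : ℝ) + 1) / ((n : ℝ) + 1) := by
  rw [vertexRatio, if_neg h, nbhd_inl, ncard_inter_inr, ncard_range_inr, Set.preimage_compl]

private lemma vr_inr (n : ℕ) (s : Set (Fin n ⊕ Fin n)) (j : Fin n) (h : Sum.inr j ∈ s) :
    vertexRatio (completeBipartiteGraph (Fin n) (Fin n)) s (Sum.inr j)
      = (((Sum.inl ⁻¹' s).ncard : ℝ) + 1) / ((n : ℝ) + 1) := by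
  rw [vertexRatio, if_pos h, nbhd_inr, ncard_inter_inl, ncard_range_inl]

private lemma vr_inr' (n : ℕ) (s : Set (Fin n ⊕ Fin n)) (j : Fin n) (h : Sum.inr j ∉ s) :
    vertexRatio (completeBipartiteGraph (Fin n) (Fin n)) s (Sum.inr j)
      = ((((Sum.inl ⁻¹' s)ᶜ).ncard : ℝ) + 1) / ((n : ℝ) + 1) := by
  rw [vertexRatio, if_neg h, nbhd_inr, ncard_inter_inl, ncard_range_inl, Set.preimage_compl]

private lemma ratio_le (p c : ℕ) (hc : c ≤ p) :
    ((c : ℝ) + 1) / (((2 * p + 1 : ℕ) : ℝ) + 1) ≤ 1 / 2 := by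
  have hc' : (c : ℝ) ≤ p := by exact_mod_cast hc
  rw [div_le_div_iff₀ (by positivity) (by norm_num)]
  push_cast
  linarith

private lemma ratio_ge (p c : ℕ) (hc : p ≤ c) :
    1 / 2 ≤ ((c : ℝ) + 1) / (((2 * p + 1 : ℕ) : ℝ) + 1) := by
  have hc' : (p : ℝ) ≤ c := by exact_mod_cast hc
  rw [div_le_div_iff₀ (by norm_num) (by positivity)]
  push_cast
  linarith

private lemma minRatio_le_half (p : ℕ) (s : Set (Fin (2 * p + 1) ⊕ Fin (2 * p + 1)))
    (hs : s.Nonempty) (hsc : sᶜ.Nonempty) :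
    minRatio (completeBipartiteGraph (Fin (2 * p + 1)) (Fin (2 * p + 1))) s ≤ 1 / 2 := by
  suffices h : ∃ v, vertexRatio
      (completeBipartiteGraph (Fin (2 * p + 1)) (Fin (2 * p + 1))) s v ≤ 1 / 2 by
    obtain ⟨v, hv⟩ := h
    exact le_trans (csInf_le ((Set.finite_range _).bddBelow) ⟨v, rfl⟩) hv
  have hBsum : (Sum.inr ⁻¹' s).ncard + ((Sum.inr ⁻¹' s)ᶜ).ncard = 2 * p + 1 := by
    rw [Set.ncard_add_ncard_compl]; simp
  rcases le_or_gt (Sum.inr ⁻¹' s).ncard p with hb | hb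
  · by_cases hL : ∃ i, Sum.inl i ∈ s
    · obtain ⟨i, hi⟩ := hL
      exact ⟨Sum.inl i, by rw [vr_inl _ s i hi]; exact ratio_le p _ hb⟩
    · push_neg at hL
      obtain ⟨i | j, hv⟩ := hs
      · exact absurd hv (hL i)
      · refine ⟨Sum.inr j, ?_⟩
        rw [vr_inr _ s j hv]
        have hA : (Sum.inl ⁻¹' s : Set (Fin (2 * p + 1))) = ∅ := by
          ext i; simpa using hL i
        rw [hA]
        simpa using ratio_le p 0 (Nat.zero_le p)
  · have hbc : ((Sum.inr ⁻¹' s)ᶜ).ncard ≤ p := by omega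
    by_cases hL : ∃ i, Sum.inl i ∉ s
    · obtain ⟨i, hi⟩ := hL
      exact ⟨Sum.inl i, by rw [vr_inl' _ s i hi]; exact ratio_le p _ hbc⟩
    · push_neg at hL
      obtain ⟨i | j, hv⟩ := hsc
      · exact absurd (hL i) hv
      · refine ⟨Sum.inr j, ?_⟩
        rw [vr_inr' _ s j hv]
        have hA : ((Sum.inl ⁻¹' s)ᶜ : Set (Fin (2 * p + 1))) = ∅ := by
          ext i; simpa using hL i
        rw [hA]
        simpa using ratio_le p 0 (Nat.zero_le p)

private lemma ncard_val_lt (n k : ℕ) (h : k ≤ n) : {i : Fin n | i.val < k}.ncard = k := by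
  have he : {i : Fin n | i.val < k} = Set.range (Fin.castLE h) := by
    ext i
    simp only [Set.mem_setOf_eq, Set.mem_range]
    constructor
    · intro hi; exact ⟨⟨i.val, hi⟩, by ext; simp⟩
    · rintro ⟨j, rfl⟩; exact j.isLt
  rw [he, ← Set.image_univ, Set.ncard_image_of_injective _ (Fin.castLE_injective h),
    Set.ncard_univ]
  simp

theorem stmt_6 (p : ℕ) :
    degreeRatio (completeBipartiteGraph (Fin (2 * p + 1)) (Fin (2 * p + 1))) = 1 / 2 := by
  set n := 2 * p + 1 with hn
  set G := completeBipartiteGraph (Fin n) (Fin n) with hG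
  -- the witness partition
  set s0 : Set (Fin n ⊕ Fin n) :=
    (Sum.inl '' {i : Fin n | i.val < p + 1}) ∪ (Sum.inr '' {i : Fin n | i.val < p}) with hs0
  have hmemL : ∀ i : Fin n, Sum.inl i ∈ s0 ↔ i.val < p + 1 := by
    intro i; simp [hs0]
  have hmemR : ∀ j : Fin n, Sum.inr j ∈ s0 ↔ j.val < p := by
    intro j; simp [hs0]
  have hA0 : (Sum.inl ⁻¹' s0 : Set (Fin n)) = {i : Fin n | i.val < p + 1} := by
    ext i; simpa using hmemL i
  have hB0 : (Sum.inr ⁻¹' s0 : Set (Fin n)) = {i : Fin n | i.val < p} := by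
    ext j; simpa using hmemR j
  have hA0c : (Sum.inl ⁻¹' s0).ncard = p + 1 := by
    rw [hA0]; exact ncard_val_lt n (p + 1) (by omega)
  have hB0c : (Sum.inr ⁻¹' s0).ncard = p := by
    rw [hB0]; exact ncard_val_lt n p (by omega)
  have hA0cc : ((Sum.inl ⁻¹' s0)ᶜ).ncard = p := by
    have := Set.ncard_add_ncard_compl (Sum.inl ⁻¹' s0 : Set (Fin n))
    rw [Nat.card_eq_fintype_card, Fintype.card_fin] at this
    omega
  have hB0cc : ((Sum.inr ⁻¹' s0)ᶜ).ncard = p + 1 := by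
    have := Set.ncard_add_ncard_compl (Sum.inr ⁻¹' s0 : Set (Fin n))
    rw [Nat.card_eq_fintype_card, Fintype.card_fin] at this
    omega
  have hhalf : (((p : ℕ) : ℝ) + 1) / ((n : ℝ) + 1) = 1 / 2 := by
    rw [hn, div_eq_div_iff (by positivity) (by norm_num)]
    push_cast; ring
  have hs0ne : s0.Nonempty := ⟨Sum.inl ⟨0, by omega⟩, (hmemL _).mpr (by simp)⟩
  have hs0cne : s0ᶜ.Nonempty := ⟨Sum.inr ⟨p, by omega⟩, by
    intro h; exact absurd ((hmemR _).mp h) (by simp)⟩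
  -- the minimum ratio of the witness is exactly 1/2
  have hmin : minRatio G s0 = 1 / 2 := by
    apply le_antisymm
    · refine le_trans (csInf_le ((Set.finite_range _).bddBelow)
        ⟨Sum.inl ⟨0, by omega⟩, rfl⟩) ?_
      rw [vr_inl n s0 _ ((hmemL _).mpr (by simp)), hB0c, hhalf]
    · apply le_csInf (Set.range_nonempty _)
      rintro x ⟨v, rfl⟩
      match v with
      | Sum.inl i =>
        by_cases h : Sum.inl i ∈ s0
        · rw [vr_inl n s0 i h, hB0c]; exact ratio_ge p p le_rfl
        · rw [vr_inl' n s0 i h, hB0cc]; exact ratio_ge p (p + 1) (by omega)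
      | Sum.inr j =>
        by_cases h : Sum.inr j ∈ s0
        · rw [vr_inr n s0 j h, hA0c]; exact ratio_ge p (p + 1) (by omega)
        · rw [vr_inr' n s0 j h, hA0cc]; exact ratio_ge p p le_rfl
  apply le_antisymm
  · apply Real.sSup_le _ (by norm_num)
    rintro x ⟨s, hs, hsc, rfl⟩
    exact minRatio_le_half p s hs hsc
  · apply le_csSup
    · refine ⟨1 / 2, ?_⟩
      rintro x ⟨s, hs, hsc, rfl⟩
      exact minRatio_le_half p s hs hsc
    · exact ⟨s0, hs0ne, hs0cne, hmin.symm⟩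

end Aux
end

section
/- Let T_k (k ≥ 1) be the k-triangle: the graph with vertices s, t, v_1, …, v_k, edge st, and edges v_i s, v_i t for 1 ≤ i ≤ k. Then q(T_k) = (⌊k/2⌋ + 1)/(k+2). -/
open SimpleGraph Set
open scoped Classical

/-- The `k`-triangle `T_k`: vertices `0` (called `s`), `1` (called `t`) and
`v_1, …, v_k`; `s` and `t` are adjacent, and each `v_i` is adjacent to both `s`
and `t`. -/
def kTriangle (k : ℕ) : SimpleGraph (Fin (k + 2)) :=
  SimpleGraph.fromRel (fun a _ => a.val ≤ 1)

private lemma kT_adj {k : ℕ} {a b : Fin (k+2)} :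
    (kTriangle k).Adj a b ↔ a ≠ b ∧ (a.val ≤ 1 ∨ b.val ≤ 1) := by
  simp [kTriangle]

private lemma ncard_val_mem {n : ℕ} (S : Finset ℕ) (hS : ∀ m ∈ S, m < n) :
    {x : Fin n | x.val ∈ S}.ncard = S.card := by
  have h : Fin.val '' {x : Fin n | x.val ∈ S} = ↑S := by
    ext m
    constructor
    · rintro ⟨x, hx, rfl⟩; exact hx
    · intro hm; exact ⟨⟨m, hS m hm⟩, hm, rfl⟩
  rw [← Set.ncard_image_of_injective _ Fin.val_injective, h, Set.ncard_coe_finset]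

private lemma nbhd_low {k : ℕ} {v : Fin (k+2)} (h : v.val ≤ 1) :
    (kTriangle k).neighborSet v = {x : Fin (k+2) | x ≠ v} := by
  ext b
  simp only [mem_neighborSet, kT_adj, mem_setOf_eq]
  constructor
  · rintro ⟨h1, _⟩; exact h1.symm
  · intro hb; exact ⟨hb.symm, Or.inl h⟩

private lemma nbhd_high {k : ℕ} {v : Fin (k+2)} (h : 2 ≤ v.val) :
    (kTriangle k).neighborSet v = {x : Fin (k+2) | x.val ≤ 1} := by
  ext b
  simp only [mem_neighborSet, kT_adj, mem_setOf_eq]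
  constructor
  · rintro ⟨hne, h1 | h1⟩
    · omega
    · exact h1
  · intro hb
    refine ⟨fun e => ?_, Or.inr hb⟩
    rw [e] at h; omega

private lemma val_le_one_iff {k : ℕ} (x : Fin (k+2)) : x.val ≤ 1 ↔ x = 0 ∨ x = 1 := by
  rw [Fin.ext_iff, Fin.ext_iff, Fin.val_zero, Fin.val_one]
  omega

private lemma ncard_ne {k : ℕ} (v : Fin (k+2)) : {x : Fin (k+2) | x ≠ v}.ncard = k + 1 := by
  have hc : {x : Fin (k+2) | x ≠ v} = ({v} : Set (Fin (k+2)))ᶜ := by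
    ext x; simp
  have h := Set.ncard_add_ncard_compl ({v} : Set (Fin (k+2)))
  rw [Set.ncard_singleton, Nat.card_eq_fintype_card, Fintype.card_fin] at h
  rw [hc]; omega

private lemma ncard_le_one_set {k : ℕ} : {x : Fin (k+2) | x.val ≤ 1}.ncard = 2 := by
  have h : {x : Fin (k+2) | x.val ≤ 1} = {0, 1} := by
    ext x; simp [val_le_one_iff]
  rw [h]
  exact Set.ncard_pair (by simp [Fin.ext_iff])

private lemma ratio_high {k : ℕ} (s : Set (Fin (k+2))) {v : Fin (k+2)} (h : 2 ≤ v.val) :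
    vertexRatio (kTriangle k) s v
      = ((({x : Fin (k+2) | x.val ≤ 1} ∩ (if v ∈ s then s else sᶜ)).ncard : ℝ) + 1) / 3 := by
  rw [vertexRatio, nbhd_high h, ncard_le_one_set]
  norm_num

private lemma ratio_low {k : ℕ} (s : Set (Fin (k+2))) {v : Fin (k+2)} (h : v.val ≤ 1) :
    vertexRatio (kTriangle k) s v
      = ((({x : Fin (k+2) | x ≠ v} ∩ (if v ∈ s then s else sᶜ)).ncard : ℝ) + 1) / ((k : ℝ) + 2) := by
  rw [vertexRatio, nbhd_low h, ncard_ne]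
  push_cast
  ring_nf

private lemma vertexRatio_compl {V : Type*} (G : SimpleGraph V) (s : Set V) :
    vertexRatio G sᶜ = vertexRatio G s := by
  funext v
  unfold vertexRatio
  by_cases hv : v ∈ s
  · rw [if_neg (by simpa using hv), if_pos hv, compl_compl]
  · rw [if_pos (by simpa using hv), if_neg hv]

private lemma minRatio_compl {V : Type*} (G : SimpleGraph V) (s : Set V) :
    minRatio G sᶜ = minRatio G s := by
  rw [minRatio, minRatio, vertexRatio_compl]

private lemma minRatio_le_s7 {k : ℕ} (s : Set (Fin (k+2))) (v : Fin (k+2)) :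
    minRatio (kTriangle k) s ≤ vertexRatio (kTriangle k) s v :=
  csInf_le (Set.finite_range _).bddBelow ⟨v, rfl⟩

private lemma third_le_target {k : ℕ} (hk : 1 ≤ k) :
    (1 : ℝ) / 3 ≤ ((k / 2 : ℕ) + 1 : ℝ) / ((k : ℝ) + 2) := by
  rw [div_le_div_iff₀ (by norm_num) (by positivity)]
  have hnat : k + 2 ≤ 3 * (k / 2 + 1) := by omega
  have h := (Nat.cast_le (α := ℝ)).mpr hnat
  push_cast at h
  linarith

private lemma target_le_two_thirds {k : ℕ} (hk : 1 ≤ k) :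
    ((k / 2 : ℕ) + 1 : ℝ) / ((k : ℝ) + 2) ≤ 2 / 3 := by
  rw [div_le_div_iff₀ (by positivity) (by norm_num)]
  have hnat : 3 * (k / 2 + 1) ≤ 2 * (k + 2) := by omega
  have h := (Nat.cast_le (α := ℝ)).mpr hnat
  push_cast at h
  linarith

private lemma case_same {k : ℕ} (hk : 1 ≤ k) (s : Set (Fin (k+2)))
    (h0 : (0 : Fin (k+2)) ∈ s) (h1 : (1 : Fin (k+2)) ∈ s) (hsc : sᶜ.Nonempty) :
    minRatio (kTriangle k) s ≤ ((k / 2 : ℕ) + 1 : ℝ) / ((k : ℝ) + 2) := by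
  obtain ⟨w, hw⟩ := hsc
  rw [Set.mem_compl_iff] at hw
  have hwv : 2 ≤ w.val := by
    by_contra hcon
    rcases (val_le_one_iff w).mp (by omega) with rfl | rfl
    · exact hw h0
    · exact hw h1
  have hempty : {x : Fin (k+2) | x.val ≤ 1} ∩ sᶜ = ∅ := by
    ext x
    simp only [Set.mem_inter_iff, Set.mem_setOf_eq, Set.mem_compl_iff, Set.mem_empty_iff_false,
      iff_false, not_and]
    intro hx
    rcases (val_le_one_iff x).mp hx with rfl | rfl
    · simp [h0]
    · simp [h1]
  have hratio : vertexRatio (kTriangle k) s w = 1 / 3 := by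
    rw [ratio_high s hwv, if_neg hw, hempty]
    simp
  calc minRatio (kTriangle k) s ≤ vertexRatio (kTriangle k) s w := minRatio_le_s7 s w
    _ = 1 / 3 := hratio
    _ ≤ _ := third_le_target hk

private lemma case_split {k : ℕ} (hk : 1 ≤ k) (s : Set (Fin (k+2)))
    (h0 : (0 : Fin (k+2)) ∈ s) (h1 : (1 : Fin (k+2)) ∉ s) :
    minRatio (kTriangle k) s ≤ ((k / 2 : ℕ) + 1 : ℝ) / ((k : ℝ) + 2) := by
  set a := ({x : Fin (k+2) | x ≠ 0} ∩ s).ncard with ha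
  set b := ({x : Fin (k+2) | x ≠ 1} ∩ sᶜ).ncard with hb
  have hseq : {x : Fin (k+2) | x ≠ 0} ∩ s = s \ {0} := by
    ext x; simp [Set.mem_diff]; tauto
  have hsceq : {x : Fin (k+2) | x ≠ 1} ∩ sᶜ = sᶜ \ {1} := by
    ext x; simp [Set.mem_diff]; tauto
  have ha' : a = s.ncard - 1 := by
    rw [ha, hseq]; exact Set.ncard_diff_singleton_of_mem h0
  have hb' : b = sᶜ.ncard - 1 := by
    rw [hb, hsceq]; exact Set.ncard_diff_singleton_of_mem (by simpa using h1)
  have hspos : 0 < s.ncard := (Set.ncard_pos).mpr ⟨0, h0⟩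
  have hscpos : 0 < sᶜ.ncard := (Set.ncard_pos).mpr ⟨1, by simpa using h1⟩
  have htot : s.ncard + sᶜ.ncard = k + 2 := by
    have h := Set.ncard_add_ncard_compl s
    rwa [Nat.card_eq_fintype_card, Fintype.card_fin] at h
  have hab : a + b = k := by omega
  have hr0 : vertexRatio (kTriangle k) s 0 = ((a : ℝ) + 1) / ((k : ℝ) + 2) := by
    rw [ratio_low s (by simp), if_pos h0]
  have hr1 : vertexRatio (kTriangle k) s 1 = ((b : ℝ) + 1) / ((k : ℝ) + 2) := by
    rw [ratio_low s (by simp), if_neg h1]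
  rcases le_or_gt a (k / 2) with hle | hlt
  · refine (minRatio_le_s7 s 0).trans ?_
    rw [hr0]
    have hc := (Nat.cast_le (α := ℝ)).mpr hle
    gcongr
  · refine (minRatio_le_s7 s 1).trans ?_
    rw [hr1]
    have hble : b ≤ k / 2 := by omega
    have hc := (Nat.cast_le (α := ℝ)).mpr hble
    gcongr

private lemma witness_ratio (k : ℕ) (hk : 1 ≤ k) :
    minRatio (kTriangle k) {x : Fin (k+2) | x.val = 0 ∨ (2 ≤ x.val ∧ x.val < k / 2 + 2)}
      = ((k / 2 : ℕ) + 1 : ℝ) / ((k : ℝ) + 2) := by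
  set s : Set (Fin (k+2)) := {x | x.val = 0 ∨ (2 ≤ x.val ∧ x.val < k / 2 + 2)} with hsdef
  have hmem : ∀ x : Fin (k+2), x ∈ s ↔ (x.val = 0 ∨ (2 ≤ x.val ∧ x.val < k / 2 + 2)) := by
    intro x; rw [hsdef]; rfl
  have h0 : (0 : Fin (k+2)) ∈ s := by rw [hmem]; simp
  have h1 : (1 : Fin (k+2)) ∉ s := by rw [hmem]; simp
  have hn0 : ({x : Fin (k+2) | x ≠ 0} ∩ s).ncard = k / 2 := by
    have he : {x : Fin (k+2) | x ≠ 0} ∩ s = {x : Fin (k+2) | x.val ∈ Finset.Ico 2 (k/2+2)} := by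
      ext x
      simp only [Set.mem_inter_iff, Set.mem_setOf_eq, ne_eq, Fin.ext_iff, Fin.val_zero,
        Finset.mem_Ico, hmem]
      omega
    rw [he, ncard_val_mem _ (by intro m hm; simp only [Finset.mem_Ico] at hm; omega),
      Nat.card_Ico]
    omega
  have hn1 : ({x : Fin (k+2) | x ≠ 1} ∩ sᶜ).ncard = k - k / 2 := by
    have he : {x : Fin (k+2) | x ≠ 1} ∩ sᶜ
        = {x : Fin (k+2) | x.val ∈ Finset.Ico (k/2+2) (k+2)} := by
      ext x
      have hx := x.isLt
      simp only [Set.mem_inter_iff, Set.mem_setOf_eq, ne_eq, Fin.ext_iff, Fin.val_one,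
        Set.mem_compl_iff, Finset.mem_Ico, hmem]
      omega
    rw [he, ncard_val_mem _ (by intro m hm; simp only [Finset.mem_Ico] at hm; omega),
      Nat.card_Ico]
    omega
  have hr0 : vertexRatio (kTriangle k) s 0 = ((k / 2 : ℕ) + 1 : ℝ) / ((k : ℝ) + 2) := by
    rw [ratio_low s (by simp), if_pos h0, hn0]
  have hr1 : vertexRatio (kTriangle k) s 1 = (((k - k / 2 : ℕ) : ℝ) + 1) / ((k : ℝ) + 2) := by
    rw [ratio_low s (by simp), if_neg h1, hn1]
  apply le_antisymm
  · exact hr0 ▸ minRatio_le_s7 s 0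
  · apply le_csInf ⟨_, Set.mem_range_self 0⟩
    rintro r ⟨v, rfl⟩
    by_cases hv : 2 ≤ v.val
    · rw [ratio_high s hv]
      by_cases hvs : v ∈ s
      · have he : {x : Fin (k+2) | x.val ≤ 1} ∩ s = {(0 : Fin (k+2))} := by
          ext x
          simp only [Set.mem_inter_iff, Set.mem_setOf_eq, Set.mem_singleton_iff, Fin.ext_iff,
            Fin.val_zero, hmem]
          omega
        rw [if_pos hvs, he, Set.ncard_singleton]
        refine (target_le_two_thirds hk).trans ?_
        norm_num
      · have he : {x : Fin (k+2) | x.val ≤ 1} ∩ sᶜ = {(1 : Fin (k+2))} := by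
          ext x
          simp only [Set.mem_inter_iff, Set.mem_setOf_eq, Set.mem_singleton_iff, Fin.ext_iff,
            Fin.val_one, Set.mem_compl_iff, hmem]
          omega
        rw [if_neg hvs, he, Set.ncard_singleton]
        refine (target_le_two_thirds hk).trans ?_
        norm_num
    · rcases (val_le_one_iff v).mp (by omega) with rfl | rfl
      · rw [hr0]
      · rw [hr1]
        have hc := (Nat.cast_le (α := ℝ)).mpr (show k / 2 ≤ k - k / 2 by omega)
        gcongr

theorem stmt_7 (k : ℕ) (hk : 1 ≤ k) :
    degreeRatio (kTriangle k) = ((k / 2 : ℕ) + 1 : ℝ) / ((k : ℝ) + 2) := by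
  have hgr : IsGreatest
      { r : ℝ | ∃ s : Set (Fin (k+2)), s.Nonempty ∧ sᶜ.Nonempty ∧ r = minRatio (kTriangle k) s }
      (((k / 2 : ℕ) + 1 : ℝ) / ((k : ℝ) + 2)) := by
    constructor
    · refine ⟨{x : Fin (k+2) | x.val = 0 ∨ (2 ≤ x.val ∧ x.val < k / 2 + 2)}, ⟨0, by simp⟩,
        ⟨1, ?_⟩, (witness_ratio k hk).symm⟩
      simp only [Set.mem_compl_iff, Set.mem_setOf_eq, Fin.val_one]
      omega
    · rintro r ⟨s, hs, hsc, rfl⟩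
      by_cases h0 : (0 : Fin (k+2)) ∈ s <;> by_cases h1 : (1 : Fin (k+2)) ∈ s
      · exact case_same hk s h0 h1 hsc
      · exact case_split hk s h0 h1
      · rw [← minRatio_compl]
        exact case_split hk sᶜ (by simpa using h0) (by simpa using h1)
      · rw [← minRatio_compl]
        exact case_same hk sᶜ (by simpa using h0) (by simpa using h1)
          (by simpa [compl_compl] using hs)
  exact hgr.csSup_eq
end

section
/- If G is a connected graph and uv is a cut-edge of G (an edge whose removal disconnects G) with d(u) ≥ 2 and d(v) ≥ 2, then q(G) ≥ 2/3. -/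
open SimpleGraph Set
open scoped Classical

/-!
Delete the cut-edge `uv` and let `S` be the component of `u`; then `v ∉ S`, and `uv` is the
only edge between `S` and its complement. Every vertex other than `u` and `v` has all its
neighbours on its own side, so its ratio is `1`, while `u` (and likewise `v`) loses exactly one
neighbour, so its ratio is `d(u) / (d(u) + 1) ≥ 2/3` because `d(u) ≥ 2`.
-/

namespace SimpleGraph

variable {V : Type*}

lemma Adj.reachable_deleteEdges_iff {G : SimpleGraph V} {a b : V} {e : Sym2 V}
    (hab : G.Adj a b) (he : s(a, b) ≠ e) (x : V) :
    (G.deleteEdges {e}).Reachable x a ↔ (G.deleteEdges {e}).Reachable x b := by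
  have hadj : (G.deleteEdges {e}).Adj a b := by simp [hab, he]
  exact ⟨fun h ↦ h.trans hadj.reachable, fun h ↦ h.trans hadj.symm.reachable⟩

variable (G : SimpleGraph V)

lemma vertexRatio_nonneg (s : Set V) (v : V) : 0 ≤ vertexRatio G s v := by
  unfold vertexRatio
  positivity

lemma vertexRatio_eq [Finite V] (s : Set V) (v : V) :
    vertexRatio G s v =
      ((G.neighborSet v).ncard - (G.neighborSet v \ (if v ∈ s then s else sᶜ)).ncard + 1) /
        ((G.neighborSet v).ncard + 1) := by
  rw [vertexRatio, ← ncard_inter_add_ncard_sdiff_eq_ncard (G.neighborSet v)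
    (if v ∈ s then s else sᶜ)]
  push_cast
  ring

lemma vertexRatio_le_one [Finite V] (s : Set V) (v : V) : vertexRatio G s v ≤ 1 := by
  rw [vertexRatio_eq, div_le_one (by positivity)]
  linarith [(Nat.cast_nonneg _ : (0 : ℝ) ≤ (G.neighborSet v \ (if v ∈ s then s else sᶜ)).ncard)]

lemma two_thirds_le_vertexRatio [Finite V] {s : Set V} {v : V}
    (h : 3 * (G.neighborSet v \ (if v ∈ s then s else sᶜ)).ncard ≤
      (G.neighborSet v).ncard + 1) :
    2 / 3 ≤ vertexRatio G s v := by
  rw [vertexRatio_eq, div_le_div_iff₀ (by norm_num) (by positivity)]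
  have h' : (3 * (G.neighborSet v \ (if v ∈ s then s else sᶜ)).ncard : ℝ) ≤
      (G.neighborSet v).ncard + 1 := by exact_mod_cast h
  linarith

lemma le_minRatio [Nonempty V] {s : Set V} {r : ℝ} (h : ∀ v, r ≤ vertexRatio G s v) :
    r ≤ minRatio G s :=
  le_ciInf h

lemma minRatio_le_one [Finite V] [Nonempty V] (s : Set V) : minRatio G s ≤ 1 := by
  obtain ⟨v⟩ := ‹Nonempty V›
  exact (csInf_le ⟨0, forall_mem_range.2 (vertexRatio_nonneg G s)⟩ ⟨v, rfl⟩).trans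
    (vertexRatio_le_one G s v)

lemma minRatio_le_degreeRatio [Finite V] {s : Set V} (hs : s.Nonempty) (hsc : sᶜ.Nonempty) :
    minRatio G s ≤ degreeRatio G := by
  have : Nonempty V := hs.to_subtype.map Subtype.val
  refine le_csSup ⟨1, ?_⟩ ⟨s, hs, hsc, rfl⟩
  rintro _ ⟨t, -, -, rfl⟩
  exact minRatio_le_one G t

lemma two_thirds_le_minRatio_of_unique_crossing_edge [Finite V] {s : Set V} {u v : V}
    (hcross : ∀ a b, G.Adj a b → s(a, b) ≠ s(u, v) → (a ∈ s ↔ b ∈ s))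
    (hu : 2 ≤ (G.neighborSet u).ncard) (hv : 2 ≤ (G.neighborSet v).ncard) :
    2 / 3 ≤ minRatio G s := by
  have : Nonempty V := ⟨u⟩
  refine le_minRatio G fun w ↦ two_thirds_le_vertexRatio G ?_
  have hsub : G.neighborSet w \ (if w ∈ s then s else sᶜ) ⊆ {x | s(w, x) = s(u, v)} := by
    rintro x ⟨hx, hside⟩
    by_contra he
    have := hcross w x hx he
    split_ifs at hside <;> simp_all
  by_cases hwu : w = u
  · subst hwu
    have hle := ncard_le_ncard (t := {v}) fun x hx ↦ Sym2.congr_right.mp (hsub hx)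
    rw [ncard_singleton] at hle
    omega
  by_cases hwv : w = v
  · subst hwv
    have hle := ncard_le_ncard (t := {u}) fun x hx ↦
      Sym2.congr_left.mp (Sym2.eq_swap.trans (hsub hx))
    rw [ncard_singleton] at hle
    omega
  · have hempty : G.neighborSet w \ (if w ∈ s then s else sᶜ) = ∅ :=
      eq_empty_of_forall_notMem fun x hx ↦ by
        have := Sym2.mem_iff.mp (hsub hx ▸ Sym2.mem_mk_left w x)
        tauto
    rw [hempty, ncard_empty]
    omega

end SimpleGraph

theorem stmt_8_general {V : Type*} [Fintype V] (G : SimpleGraph V) (hG : G.Connected)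
    (u v : V)
    (hcut : ¬ (G.deleteEdges {s(u, v)}).Connected)
    (hu : 2 ≤ (G.neighborSet u).ncard) (hv : 2 ≤ (G.neighborSet v).ncard) :
    2 / 3 ≤ degreeRatio G := by
  have hbridge : G.IsBridge s(u, v) :=
    by_contra fun h ↦ hcut (hG.connected_delete_edge_of_not_isBridge h)
  let S : Set V := {w | (G.deleteEdges {s(u, v)}).Reachable u w}
  calc 2 / 3 ≤ minRatio G S :=
        G.two_thirds_le_minRatio_of_unique_crossing_edge
          (fun _ _ hab he ↦ hab.reachable_deleteEdges_iff he u) hu hv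
    _ ≤ degreeRatio G := G.minRatio_le_degreeRatio ⟨u, Reachable.refl u⟩ ⟨v, hbridge⟩

theorem stmt_8 {V : Type*} [Fintype V] (G : SimpleGraph V) (hG : G.Connected)
    (u v : V) (huv : G.Adj u v)
    (hcut : ¬ (G.deleteEdges {s(u, v)}).Connected)
    (hu : 2 ≤ (G.neighborSet u).ncard) (hv : 2 ≤ (G.neighborSet v).ncard) :
    2 / 3 ≤ degreeRatio G :=
  stmt_8_general G hG u v hcut hu hv
end

section
/- For connected graphs G and H, each with at least two vertices, the cartesian product G □ H has a matching-cut if and only if G has a matching-cut or H has a matching-cut. -/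
open SimpleGraph Set
open scoped Classical

/-- `G` has a matching-cut: a nontrivial partition `(s, sᶜ)` such that every
vertex has at most one neighbor on the other side. -/
def hasMatchingCut {V : Type*} (G : SimpleGraph V) : Prop :=
  ∃ s : Set V, s.Nonempty ∧ sᶜ.Nonempty ∧
    (∀ v ∈ s, (G.neighborSet v ∩ sᶜ).ncard ≤ 1) ∧
    (∀ v ∈ sᶜ, (G.neighborSet v ∩ s).ncard ≤ 1)

theorem stmt_15 {V W : Type*} [Fintype V] [Fintype W]
    (G : SimpleGraph V) (H : SimpleGraph W)
    (hG : G.Connected) (hH : H.Connected) (hV : Nontrivial V) (hW : Nontrivial W) :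
    hasMatchingCut (G □ H) ↔ hasMatchingCut G ∨ hasMatchingCut H := by
  constructor
  · rintro ⟨s, ⟨⟨a, k⟩, hak⟩, ⟨⟨b, m⟩, hbm⟩, hs1, hs2⟩
    have hs1' : ∀ v ∈ s, ∀ y ∈ (G □ H).neighborSet v ∩ sᶜ,
        ∀ z ∈ (G □ H).neighborSet v ∩ sᶜ, y = z :=
      fun v hv => (Set.ncard_le_one (Set.toFinite _)).mp (hs1 v hv)
    have hs2' : ∀ v ∈ sᶜ, ∀ y ∈ (G □ H).neighborSet v ∩ s,
        ∀ z ∈ (G □ H).neighborSet v ∩ s, y = z :=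
      fun v hv => (Set.ncard_le_one (Set.toFinite _)).mp (hs2 v hv)
    by_cases hM : (a, m) ∈ s
    · -- slice at level m gives a matching-cut of G
      left
      refine ⟨{x : V | (x, m) ∈ s}, ⟨a, hM⟩, ⟨b, hbm⟩, ?_, ?_⟩
      · intro x hx
        rw [Set.ncard_le_one (Set.toFinite _)]
        rintro y ⟨hy1, hy2⟩ z ⟨hz1, hz2⟩
        have := hs1' (x, m) hx (y, m)
          ⟨by simp [SimpleGraph.boxProd_adj]; exact hy1, hy2⟩ (z, m)
          ⟨by simp [SimpleGraph.boxProd_adj]; exact hz1, hz2⟩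
        exact congrArg Prod.fst this
      · intro x hx
        rw [Set.ncard_le_one (Set.toFinite _)]
        rintro y ⟨hy1, hy2⟩ z ⟨hz1, hz2⟩
        have := hs2' (x, m) hx (y, m)
          ⟨by simp [SimpleGraph.boxProd_adj]; exact hy1, hy2⟩ (z, m)
          ⟨by simp [SimpleGraph.boxProd_adj]; exact hz1, hz2⟩
        exact congrArg Prod.fst this
    · -- column at a gives a matching-cut of H
      right
      refine ⟨{w : W | (a, w) ∈ s}, ⟨k, hak⟩, ⟨m, hM⟩, ?_, ?_⟩
      · intro x hx
        rw [Set.ncard_le_one (Set.toFinite _)]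
        rintro y ⟨hy1, hy2⟩ z ⟨hz1, hz2⟩
        have := hs1' (a, x) hx (a, y)
          ⟨by simp [SimpleGraph.boxProd_adj]; exact hy1, hy2⟩ (a, z)
          ⟨by simp [SimpleGraph.boxProd_adj]; exact hz1, hz2⟩
        exact congrArg Prod.snd this
      · intro x hx
        rw [Set.ncard_le_one (Set.toFinite _)]
        rintro y ⟨hy1, hy2⟩ z ⟨hz1, hz2⟩
        have := hs2' (a, x) hx (a, y)
          ⟨by simp [SimpleGraph.boxProd_adj]; exact hy1, hy2⟩ (a, z)
          ⟨by simp [SimpleGraph.boxProd_adj]; exact hz1, hz2⟩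
        exact congrArg Prod.snd this
  · rintro (⟨S, ⟨a, ha⟩, ⟨b, hb⟩, hS1, hS2⟩ | ⟨T, ⟨k, hk⟩, ⟨m, hm⟩, hT1, hT2⟩)
    · obtain ⟨w⟩ := hW.to_nonempty
      have hS1' : ∀ v ∈ S, ∀ y ∈ G.neighborSet v ∩ Sᶜ, ∀ z ∈ G.neighborSet v ∩ Sᶜ, y = z :=
        fun v hv => (Set.ncard_le_one (Set.toFinite _)).mp (hS1 v hv)
      have hS2' : ∀ v ∈ Sᶜ, ∀ y ∈ G.neighborSet v ∩ S, ∀ z ∈ G.neighborSet v ∩ S, y = z :=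
        fun v hv => (Set.ncard_le_one (Set.toFinite _)).mp (hS2 v hv)
      refine ⟨{p : V × W | p.1 ∈ S}, ⟨(a, w), ha⟩, ⟨(b, w), hb⟩, ?_, ?_⟩
      · rintro ⟨x, u⟩ hx
        rw [Set.ncard_le_one (Set.toFinite _)]
        rintro ⟨y, u'⟩ ⟨hy1, hy2⟩ ⟨z, u''⟩ ⟨hz1, hz2⟩
        simp only [SimpleGraph.mem_neighborSet, SimpleGraph.boxProd_adj] at hy1 hz1
        simp only [Set.mem_compl_iff, Set.mem_setOf_eq] at hy2 hz2 hx
        rcases hy1 with ⟨hy1, rfl⟩ | ⟨-, rfl⟩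
        · rcases hz1 with ⟨hz1, rfl⟩ | ⟨-, rfl⟩
          · have := hS1' x hx y ⟨hy1, hy2⟩ z ⟨hz1, hz2⟩
            simp [this]
          · exact absurd hx hz2
        · exact absurd hx hy2
      · rintro ⟨x, u⟩ hx
        rw [Set.ncard_le_one (Set.toFinite _)]
        rintro ⟨y, u'⟩ ⟨hy1, hy2⟩ ⟨z, u''⟩ ⟨hz1, hz2⟩
        simp only [SimpleGraph.mem_neighborSet, SimpleGraph.boxProd_adj] at hy1 hz1
        simp only [Set.mem_compl_iff, Set.mem_setOf_eq] at hy2 hz2 hx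
        rcases hy1 with ⟨hy1, rfl⟩ | ⟨-, rfl⟩
        · rcases hz1 with ⟨hz1, rfl⟩ | ⟨-, rfl⟩
          · have := hS2' x hx y ⟨hy1, hy2⟩ z ⟨hz1, hz2⟩
            simp [this]
          · exact absurd hz2 hx
        · exact absurd hy2 hx
    · obtain ⟨v⟩ := hV.to_nonempty
      have hT1' : ∀ u ∈ T, ∀ y ∈ H.neighborSet u ∩ Tᶜ, ∀ z ∈ H.neighborSet u ∩ Tᶜ, y = z :=
        fun u hu => (Set.ncard_le_one (Set.toFinite _)).mp (hT1 u hu)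
      have hT2' : ∀ u ∈ Tᶜ, ∀ y ∈ H.neighborSet u ∩ T, ∀ z ∈ H.neighborSet u ∩ T, y = z :=
        fun u hu => (Set.ncard_le_one (Set.toFinite _)).mp (hT2 u hu)
      refine ⟨{p : V × W | p.2 ∈ T}, ⟨(v, k), hk⟩, ⟨(v, m), hm⟩, ?_, ?_⟩
      · rintro ⟨x, u⟩ hx
        rw [Set.ncard_le_one (Set.toFinite _)]
        rintro ⟨y, u'⟩ ⟨hy1, hy2⟩ ⟨z, u''⟩ ⟨hz1, hz2⟩
        simp only [SimpleGraph.mem_neighborSet, SimpleGraph.boxProd_adj] at hy1 hz1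
        simp only [Set.mem_compl_iff, Set.mem_setOf_eq] at hy2 hz2 hx
        rcases hy1 with ⟨-, rfl⟩ | ⟨hy1, rfl⟩
        · exact absurd hx hy2
        · rcases hz1 with ⟨-, rfl⟩ | ⟨hz1, rfl⟩
          · exact absurd hx hz2
          · have := hT1' u hx u' ⟨hy1, hy2⟩ u'' ⟨hz1, hz2⟩
            simp [this]
      · rintro ⟨x, u⟩ hx
        rw [Set.ncard_le_one (Set.toFinite _)]
        rintro ⟨y, u'⟩ ⟨hy1, hy2⟩ ⟨z, u''⟩ ⟨hz1, hz2⟩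
        simp only [SimpleGraph.mem_neighborSet, SimpleGraph.boxProd_adj] at hy1 hz1
        simp only [Set.mem_compl_iff, Set.mem_setOf_eq] at hy2 hz2 hx
        rcases hy1 with ⟨-, rfl⟩ | ⟨hy1, rfl⟩
        · exact absurd hy2 hx
        · rcases hz1 with ⟨-, rfl⟩ | ⟨hz1, rfl⟩
          · exact absurd hz2 hx
          · have := hT2' u hx u' ⟨hy1, hy2⟩ u'' ⟨hz1, hz2⟩
            simp [this]
end
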